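/- Under the hypotheses of Assumption A in an open set U ⊆ (ℝ∖{0}) × ℝ^{d−1}, the function F(z,u) = P(Σ_{i=1}^d u_i X_i ≤ z) is partially differentiable in z on ℝ × U with ∂F/∂z (z,u) = |u₁|⁻¹ · E[φ(u₁⁻¹(z − Σ_{j=2}^d u_j X_j), X₂, …, X_d)], and this partial derivative is jointly continuous in (z,u). -/

import Mathlib

open MeasureTheory

/-- `φ` is a conditional density of `X₁` given the vector `Y = (X₂,…,X_d)`. -/
def IsCondDensity {Ω : Type*} [MeasurableSpace Ω] (μ : Measure Ω)
    {m : ℕ} (X1 : Ω → ℝ) (Y : Ω → (Fin m → ℝ)) (φ : ℝ → (Fin m → ℝ) → ℝ) : Prop :=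
  Measurable (Function.uncurry φ) ∧ (∀ t x, 0 ≤ φ t x) ∧
    ∀ A : Set ℝ, MeasurableSet A → ∀ B : Set (Fin m → ℝ), MeasurableSet B →
      (μ {ω | X1 ω ∈ A ∧ Y ω ∈ B}).toReal
        = ∫ ω in {ω | Y ω ∈ B}, ∫ t in A, φ t (Y ω) ∂(volume) ∂μ

/-- The weighted sum `Z(u) = u₁ X₁ + Σ_{j≥2} u_j X_j` for the weight vector `p = (u₁, (u_j))`. -/
noncomputable def Zw {Ω : Type*} {m : ℕ} (X1 : Ω → ℝ) (Y : Ω → (Fin m → ℝ))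
    (p : ℝ × (Fin m → ℝ)) (ω : Ω) : ℝ :=
  p.1 * X1 ω + ∑ i, p.2 i * Y ω i

/-- The distribution function `F(z, u) = P(Z(u) ≤ z)`. -/
noncomputable def Fcdf {Ω : Type*} [MeasurableSpace Ω] (μ : Measure Ω)
    {m : ℕ} (X1 : Ω → ℝ) (Y : Ω → (Fin m → ℝ)) (z : ℝ) (p : ℝ × (Fin m → ℝ)) : ℝ :=
  (μ {ω | Zw X1 Y p ω ≤ z}).toReal

/-- `E[φ(u₁⁻¹(t - Σ_{j≥2} u_j X_j), X₂,…,X_d)]`. -/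
noncomputable def densNum {Ω : Type*} [MeasurableSpace Ω] (μ : Measure Ω)
    {m : ℕ} (Y : Ω → (Fin m → ℝ)) (φ : ℝ → (Fin m → ℝ) → ℝ)
    (t : ℝ) (p : ℝ × (Fin m → ℝ)) : ℝ :=
  ∫ ω, φ (p.1⁻¹ * (t - ∑ i, p.2 i * Y ω i)) (Y ω) ∂μ

/-- `E[X_i φ(u₁⁻¹(t - Σ_{j≥2} u_j X_j), X₂,…,X_d)]` for `i ≥ 2`. -/
noncomputable def densNumX {Ω : Type*} [MeasurableSpace Ω] (μ : Measure Ω)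
    {m : ℕ} (Y : Ω → (Fin m → ℝ)) (φ : ℝ → (Fin m → ℝ) → ℝ) (i : Fin m)
    (t : ℝ) (p : ℝ × (Fin m → ℝ)) : ℝ :=
  ∫ ω, Y ω i * φ (p.1⁻¹ * (t - ∑ j, p.2 j * Y ω j)) (Y ω) ∂μ

/-- Assumption A from the paper, on the open set `U ⊆ (ℝ∖{0}) × ℝ^{d-1}`:
(i) `t ↦ φ(t,x)` is continuous; (ii) `(t,u) ↦ E[φ(u₁⁻¹(t - Σ u_j X_j), X₂,…,X_d)]`
is finite-valued and jointly continuous on `ℝ × U`; (iii) likewise for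
`(t,u) ↦ E[X_i φ(u₁⁻¹(t - Σ u_j X_j), X₂,…,X_d)]`, `i = 2,…,d`. -/
def AssumptionA {Ω : Type*} [MeasurableSpace Ω] (μ : Measure Ω)
    {m : ℕ} (X1 : Ω → ℝ) (Y : Ω → (Fin m → ℝ)) (φ : ℝ → (Fin m → ℝ) → ℝ)
    (U : Set (ℝ × (Fin m → ℝ))) : Prop :=
  IsOpen U ∧ (∀ p ∈ U, p.1 ≠ 0) ∧
  (∀ x, Continuous fun t => φ t x) ∧
  (∀ (t : ℝ), ∀ p ∈ U, Integrable (fun ω => φ (p.1⁻¹ * (t - ∑ i, p.2 i * Y ω i)) (Y ω)) μ) ∧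
  ContinuousOn (fun q : ℝ × (ℝ × (Fin m → ℝ)) => densNum μ Y φ q.1 q.2) (Set.univ ×ˢ U) ∧
  (∀ i : Fin m, ∀ (t : ℝ), ∀ p ∈ U,
    Integrable (fun ω => Y ω i * φ (p.1⁻¹ * (t - ∑ j, p.2 j * Y ω j)) (Y ω)) μ) ∧
  (∀ i : Fin m,
    ContinuousOn (fun q : ℝ × (ℝ × (Fin m → ℝ)) => densNumX μ Y φ i q.1 q.2) (Set.univ ×ˢ U))

/-!
The density identity says that the joint law of `(X₁, Y)` and the measure
`φ(t, y) dt ⊗ law(Y)` agree on rectangles, hence everywhere. Computing the mass of the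
half-space `{u₁ x + Σⱼ uⱼ yⱼ ≤ z}` under the latter by Tonelli and the substitution
`x = u₁⁻¹ (t - Σⱼ uⱼ yⱼ)` in each fibre gives
`F(z, u) = ∫_{-∞}^z |u₁|⁻¹ E[φ(u₁⁻¹ (t - Σⱼ uⱼ Xⱼ), X₂, …, X_d)] dt`.
The integrand is continuous in `t` by Assumption A, so the fundamental theorem of calculus
gives the derivative; its joint continuity is Assumption A again, as `u₁ ≠ 0` on `U`.
-/

open Set ENNReal

lemma lintegral_setOf_mul_add_le {c : ℝ} (hc : c ≠ 0) (d z : ℝ) {f : ℝ → ℝ≥0∞}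
    (hf : Measurable f) :
    ∫⁻ x in {x | c * x + d ≤ z}, f x
      = ENNReal.ofReal |c|⁻¹ * ∫⁻ t in Iic z, f (c⁻¹ * (t - d)) := by
  set T : ℝ → ℝ := fun t => c⁻¹ * (t - d)
  have hT : Measurable T := by fun_prop
  have hS : MeasurableSet {x : ℝ | c * x + d ≤ z} := measurableSet_le (by fun_prop) measurable_const
  have hpre : T ⁻¹' {x | c * x + d ≤ z} = Iic z := by
    ext t
    change c * (c⁻¹ * (t - d)) + d ≤ z ↔ t ≤ z
    rw [mul_inv_cancel_left₀ hc, sub_add_cancel]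
  have hmap : volume.map T = ENNReal.ofReal |c| • volume := by
    change volume.map ((fun x => c⁻¹ * x) ∘ fun t => t - d) = _
    rw [← Measure.map_map (measurable_const_mul _) (measurable_sub_const d),
      (measurePreserving_sub_right volume d).map_eq, Real.map_volume_mul_left (inv_ne_zero hc),
      inv_inv]
  have hsubst :
      ∫⁻ t in Iic z, f (T t) = ENNReal.ofReal |c| * ∫⁻ x in {x | c * x + d ≤ z}, f x := by
    rw [← hpre, ← setLIntegral_map hS hf hT, hmap, Measure.restrict_smul, lintegral_smul_measure,
      smul_eq_mul]
  rw [hsubst, ← mul_assoc, ← ENNReal.ofReal_mul (by positivity),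
    inv_mul_cancel₀ (abs_ne_zero.2 hc), ENNReal.ofReal_one, one_mul]

lemma withDensity_prod_setOf_mul_add_le {β : Type*} [MeasurableSpace β] (η : Measure β)
    [SFinite η] {f : ℝ × β → ℝ≥0∞} (hf : Measurable f) {c : ℝ} (hc : c ≠ 0) {g : β → ℝ}
    (hg : Measurable g) (z : ℝ) :
    (volume.prod η).withDensity f {q | c * q.1 + g q.2 ≤ z}
      = ENNReal.ofReal |c|⁻¹ * ∫⁻ t in Iic z, ∫⁻ y, f (c⁻¹ * (t - g y), y) ∂η := by
  have hS : MeasurableSet {q : ℝ × β | c * q.1 + g q.2 ≤ z} :=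
    measurableSet_le (by fun_prop) measurable_const
  have hfiber : ∀ y, ∫⁻ x, {q : ℝ × β | c * q.1 + g q.2 ≤ z}.indicator f (x, y)
      = ENNReal.ofReal |c|⁻¹ * ∫⁻ t in Iic z, f (c⁻¹ * (t - g y), y) := fun y => by
    rw [← lintegral_setOf_mul_add_le hc (g y) z (f := fun x => f (x, y))
        (hf.comp measurable_prodMk_right),
      ← lintegral_indicator (measurableSet_le (by fun_prop) measurable_const)]
    rfl
  rw [withDensity_apply _ hS, ← lintegral_indicator hS,
    lintegral_prod_symm _ (hf.indicator hS).aemeasurable, lintegral_congr hfiber,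
    lintegral_const_mul' _ _ ofReal_ne_top]
  congr 1
  exact lintegral_lintegral_swap (hf.comp (by fun_prop)).aemeasurable

lemma hasDerivAt_integral_Iic {E : Type*} [NormedAddCommGroup E] [NormedSpace ℝ E]
    [CompleteSpace E] {k : ℝ → E} (hk : Continuous k) (hint : ∀ z, IntegrableOn k (Iic z))
    (z : ℝ) : HasDerivAt (fun z => ∫ t in Iic z, k t) (k z) z := by
  have hsplit : (fun z => ∫ t in Iic z, k t) = fun z => (∫ t in Iic 0, k t) + ∫ t in 0..z, k t :=
    funext fun z => by rw [← intervalIntegral.integral_Iic_sub_Iic (hint 0) (hint z),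
      add_sub_cancel]
  rw [hsplit]
  exact (intervalIntegral.integral_hasDerivAt_right (hk.intervalIntegrable _ _)
    (hk.stronglyMeasurableAtFilter _ _) hk.continuousAt).const_add _

namespace IsCondDensity

variable {Ω : Type*} [MeasurableSpace Ω] {μ : Measure Ω} {m : ℕ} {X1 : Ω → ℝ}
  {Y : Ω → (Fin m → ℝ)} {φ : ℝ → (Fin m → ℝ) → ℝ} {p : ℝ × (Fin m → ℝ)}

lemma ae_lintegral_ne_top [IsFiniteMeasure μ] (hφ : IsCondDensity μ X1 Y φ)
    (hY : Measurable Y) :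
    ∀ᵐ y ∂μ.map Y, ∫⁻ t, ENNReal.ofReal (φ t y) ≠ ∞ := by
  obtain ⟨hφm, hφnn, hφcd⟩ := hφ
  set N : Set (Fin m → ℝ) := {y | ∫⁻ t, ENNReal.ofReal (φ t y) = ∞}
  have hN : MeasurableSet N :=
    (hφm.ennreal_ofReal.lintegral_prod_left' : Measurable fun y => _) (measurableSet_singleton ∞)
  -- on `N` the inner Bochner integral is the junk value `0`
  have hzero : ∀ ω ∈ Y ⁻¹' N, ∫ t in univ, φ t (Y ω) = 0 := fun ω hω => by
    rw [Measure.restrict_univ, integral_eq_lintegral_of_nonneg_ae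
      (.of_forall fun t => hφnn t (Y ω)) (hφm.comp measurable_prodMk_right).aestronglyMeasurable,
      hω, toReal_top]
  have h : (μ {ω | X1 ω ∈ univ ∧ Y ω ∈ N}).toReal
      = ∫ ω in Y ⁻¹' N, ∫ t in univ, φ t (Y ω) ∂volume ∂μ := hφcd univ .univ N hN
  rw [setIntegral_congr_fun (hY hN) hzero, integral_zero,
    toReal_eq_zero_iff, or_iff_left (measure_ne_top _ _)] at h
  have hnull : μ.map Y N = 0 := by
    rw [Measure.map_apply hY hN, ← h]
    simp [preimage]
  filter_upwards [measure_eq_zero_iff_ae_notMem.1 hnull] with y hy using hy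

lemma toReal_withDensity_prod [IsFiniteMeasure μ] (hφ : IsCondDensity μ X1 Y φ)
    (hY : Measurable Y) {A : Set ℝ} (hA : MeasurableSet A) {B : Set (Fin m → ℝ)}
    (hB : MeasurableSet B) :
    ((volume.prod (μ.map Y)).withDensity (fun q => ENNReal.ofReal (φ q.1 q.2)) (A ×ˢ B)).toReal
      = ∫ y in B, (∫ t in A, φ t y) ∂μ.map Y := by
  have hφe : Measurable fun q : ℝ × (Fin m → ℝ) => ENNReal.ofReal (φ q.1 q.2) :=
    hφ.1.ennreal_ofReal
  have hfin : ∀ᵐ y ∂(μ.map Y).restrict B, ∫⁻ t in A, ENNReal.ofReal (φ t y) < ∞ :=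
    ae_restrict_of_ae <| (hφ.ae_lintegral_ne_top hY).mono fun y hy =>
      (setLIntegral_le_lintegral A _).trans_lt hy.lt_top
  rw [withDensity_apply _ (hA.prod hB), ← Measure.prod_restrict,
    lintegral_prod_symm _ hφe.aemeasurable]
  have hmeas : Measurable fun y => ∫⁻ t in A, ENNReal.ofReal (φ t y) :=
    (hφe.comp measurable_swap).lintegral_prod_right'
  rw [← integral_toReal hmeas.aemeasurable hfin]
  refine setIntegral_congr_fun hB fun y _ => ?_
  exact (integral_eq_lintegral_of_nonneg_ae (.of_forall fun t => hφ.2.1 t y)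
    (hφ.1.comp measurable_prodMk_right).aestronglyMeasurable).symm

lemma toReal_map_prodMk_prod (hφ : IsCondDensity μ X1 Y φ) (hX1 : Measurable X1)
    (hY : Measurable Y) {A : Set ℝ} (hA : MeasurableSet A) {B : Set (Fin m → ℝ)}
    (hB : MeasurableSet B) :
    (μ.map (fun ω => (X1 ω, Y ω)) (A ×ˢ B)).toReal = ∫ y in B, (∫ t in A, φ t y) ∂μ.map Y := by
  have hmeas : StronglyMeasurable fun y => ∫ t in A, φ t y :=
    (hφ.1.comp measurable_swap).stronglyMeasurable.integral_prod_right'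
  rw [Measure.map_apply (hX1.prodMk hY) (hA.prod hB),
    setIntegral_map hB hmeas.aestronglyMeasurable hY.aemeasurable]
  exact hφ.2.2 A hA B hB

lemma map_prodMk_eq_withDensity [IsProbabilityMeasure μ] (hφ : IsCondDensity μ X1 Y φ)
    (hX1 : Measurable X1) (hY : Measurable Y) :
    μ.map (fun ω => (X1 ω, Y ω))
      = (volume.prod (μ.map Y)).withDensity (fun q => ENNReal.ofReal (φ q.1 q.2)) := by
  set ρ := (volume.prod (μ.map Y)).withDensity (fun q => ENNReal.ofReal (φ q.1 q.2))
  have : IsProbabilityMeasure (μ.map fun ω => (X1 ω, Y ω)) :=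
    Measure.isProbabilityMeasure_map (hX1.prodMk hY).aemeasurable
  have hrect : ∀ {A : Set ℝ}, MeasurableSet A → ∀ {B : Set (Fin m → ℝ)}, MeasurableSet B →
      (μ.map (fun ω => (X1 ω, Y ω)) (A ×ˢ B)).toReal = (ρ (A ×ˢ B)).toReal := fun hA _ hB => by
    rw [hφ.toReal_map_prodMk_prod hX1 hY hA hB, hφ.toReal_withDensity_prod hY hA hB]
  have : IsFiniteMeasure ρ := ⟨lt_top_iff_ne_top.2 fun h => by
    simpa [h] using hrect MeasurableSet.univ MeasurableSet.univ⟩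
  refine ext_of_generate_finite _ generateFrom_prod.symm isPiSystem_prod ?_ ?_
  · rintro _ ⟨A, hA, B, hB, rfl⟩
    exact (toReal_eq_toReal_iff' (measure_ne_top _ _) (measure_ne_top _ _)).1 (hrect hA hB)
  · rw [← univ_prod_univ]
    exact (toReal_eq_toReal_iff' (measure_ne_top _ _) (measure_ne_top _ _)).1
      (hrect .univ .univ)

lemma measure_Zw_le_eq_lintegral [IsProbabilityMeasure μ] (hφ : IsCondDensity μ X1 Y φ)
    (hX1 : Measurable X1) (hY : Measurable Y) (hp : p.1 ≠ 0)
    (hint : ∀ t, Integrable (fun ω => φ (p.1⁻¹ * (t - ∑ i, p.2 i * Y ω i)) (Y ω)) μ) (z : ℝ) :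
    μ {ω | Zw X1 Y p ω ≤ z} = ∫⁻ t in Iic z, ENNReal.ofReal (|p.1|⁻¹ * densNum μ Y φ t p) := by
  have hφm : Measurable (Function.uncurry φ) := hφ.1
  have hS : MeasurableSet {q : ℝ × (Fin m → ℝ) | p.1 * q.1 + ∑ i, p.2 i * q.2 i ≤ z} :=
    measurableSet_le (by fun_prop) measurable_const
  have hinner : ∀ t, ∫⁻ y, ENNReal.ofReal (φ (p.1⁻¹ * (t - ∑ i, p.2 i * y i)) y) ∂μ.map Y
      = ENNReal.ofReal (densNum μ Y φ t p) := fun t => by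
    rw [lintegral_map (by fun_prop) hY]
    exact (ofReal_integral_eq_lintegral_ofReal (hint t) (.of_forall fun ω => hφ.2.1 _ _)).symm
  calc μ {ω | Zw X1 Y p ω ≤ z}
      = μ.map (fun ω => (X1 ω, Y ω)) {q | p.1 * q.1 + ∑ i, p.2 i * q.2 i ≤ z} := by
        rw [Measure.map_apply (hX1.prodMk hY) hS]
        rfl
    _ = ENNReal.ofReal |p.1|⁻¹ * ∫⁻ t in Iic z,
          ∫⁻ y, ENNReal.ofReal (φ (p.1⁻¹ * (t - ∑ i, p.2 i * y i)) y) ∂μ.map Y := by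
        rw [hφ.map_prodMk_eq_withDensity hX1 hY]
        exact withDensity_prod_setOf_mul_add_le (f := fun q => ENNReal.ofReal (φ q.1 q.2))
          (g := fun y => ∑ i, p.2 i * y i) _ hφ.1.ennreal_ofReal hp (by fun_prop) z
    _ = ∫⁻ t in Iic z, ENNReal.ofReal (|p.1|⁻¹ * densNum μ Y φ t p) := by
        simp_rw [hinner, ← lintegral_const_mul' _ _ ofReal_ne_top,
          ← ENNReal.ofReal_mul (inv_nonneg.2 (abs_nonneg _))]

lemma integrableOn_Iic_and_Fcdf_eq [IsProbabilityMeasure μ] (hφ : IsCondDensity μ X1 Y φ)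
    (hX1 : Measurable X1) (hY : Measurable Y) (hp : p.1 ≠ 0)
    (hint : ∀ t, Integrable (fun ω => φ (p.1⁻¹ * (t - ∑ i, p.2 i * Y ω i)) (Y ω)) μ) (z : ℝ) :
    IntegrableOn (fun t => |p.1|⁻¹ * densNum μ Y φ t p) (Iic z)
      ∧ Fcdf μ X1 Y z p = ∫ t in Iic z, |p.1|⁻¹ * densNum μ Y φ t p := by
  have hnn : 0 ≤ᵐ[volume.restrict (Iic z)] fun t => |p.1|⁻¹ * densNum μ Y φ t p :=
    .of_forall fun t => mul_nonneg (inv_nonneg.2 (abs_nonneg _))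
      (integral_nonneg fun ω => hφ.2.1 _ _)
  have hφm : Measurable (Function.uncurry φ) := hφ.1
  have hmeas : StronglyMeasurable fun t => densNum μ Y φ t p :=
    StronglyMeasurable.integral_prod_right' (f := fun q : ℝ × Ω =>
      φ (p.1⁻¹ * (q.1 - ∑ i, p.2 i * Y q.2 i)) (Y q.2))
      (by fun_prop : Measurable _).stronglyMeasurable
  have hmeas' : AEStronglyMeasurable (fun t => |p.1|⁻¹ * densNum μ Y φ t p)
      (volume.restrict (Iic z)) := (hmeas.const_mul _).aestronglyMeasurable
  have hlaw := hφ.measure_Zw_le_eq_lintegral hX1 hY hp hint z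
  refine ⟨⟨hmeas', (hasFiniteIntegral_iff_ofReal hnn).2 (hlaw ▸ measure_lt_top _ _)⟩, ?_⟩
  rw [Fcdf, hlaw, integral_eq_lintegral_of_nonneg_ae hnn hmeas']

end IsCondDensity

theorem stmt9_general {Ω : Type*} [MeasurableSpace Ω] (μ : Measure Ω) [IsProbabilityMeasure μ]
    (m : ℕ)
    (X1 : Ω → ℝ) (Y : Ω → (Fin m → ℝ)) (hX1 : Measurable X1) (hY : Measurable Y)
    (φ : ℝ → (Fin m → ℝ) → ℝ) (hφ : IsCondDensity μ X1 Y φ)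
    (U : Set (ℝ × (Fin m → ℝ))) (hA : AssumptionA μ X1 Y φ U) :
    (∀ (z : ℝ), ∀ p ∈ U,
      HasDerivAt (fun z' => Fcdf μ X1 Y z' p) (|p.1|⁻¹ * densNum μ Y φ z p) z) ∧
    ContinuousOn (fun q : ℝ × (ℝ × (Fin m → ℝ)) => |q.2.1|⁻¹ * densNum μ Y φ q.1 q.2)
      (Set.univ ×ˢ U) := by
  obtain ⟨-, hU, -, hint, hcont, -, -⟩ := hA
  refine ⟨fun z p hp => ?_, ?_⟩
  · have hF := hφ.integrableOn_Iic_and_Fcdf_eq hX1 hY (hU p hp) (fun t => hint t p hp)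
    have hk : Continuous fun t => |p.1|⁻¹ * densNum μ Y φ t p :=
      continuous_const.mul <| hcont.comp_continuous (f := fun t => (t, p)) (by fun_prop)
        fun t => ⟨mem_univ t, hp⟩
    simp_rw [fun z => (hF z).2]
    exact hasDerivAt_integral_Iic hk (fun z => (hF z).1) z
  · refine ContinuousOn.mul ?_ hcont
    exact (continuous_abs.comp (continuous_fst.comp continuous_snd)).continuousOn.inv₀
      fun q hq => abs_ne_zero.2 (hU q.2 hq.2)

/-- Under Assumption A, `F(z,u) = P(Σ u_i X_i ≤ z)` is partially differentiable in `z` with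
jointly continuous derivative `∂F/∂z = |u₁|⁻¹ E[φ(u₁⁻¹(z - Σ_{j≥2} u_j X_j), X₂,…,X_d)]`. -/
theorem stmt9 {Ω : Type*} [MeasurableSpace Ω] (μ : Measure Ω) [IsProbabilityMeasure μ]
    (m : ℕ) (hm : 1 ≤ m)
    (X1 : Ω → ℝ) (Y : Ω → (Fin m → ℝ)) (hX1 : Measurable X1) (hY : Measurable Y)
    (φ : ℝ → (Fin m → ℝ) → ℝ) (hφ : IsCondDensity μ X1 Y φ)
    (U : Set (ℝ × (Fin m → ℝ))) (hA : AssumptionA μ X1 Y φ U) :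
    (∀ (z : ℝ), ∀ p ∈ U,
      HasDerivAt (fun z' => Fcdf μ X1 Y z' p) (|p.1|⁻¹ * densNum μ Y φ z p) z) ∧
    ContinuousOn (fun q : ℝ × (ℝ × (Fin m → ℝ)) => |q.2.1|⁻¹ * densNum μ Y φ q.1 q.2)
      (Set.univ ×ˢ U) :=
  stmt9_general μ m X1 Y hX1 hY φ hφ U hA
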